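/- Let Ω ⊆ ℝ^{2n+1} be an open subset of the Heisenberg group ℍ^n and let 1 < p < ∞. Let v ∈ C^1(Ω) with v > 0 on Ω be a weak sub-solution of −∇_H·(|∇_H v|^{p−2}∇_H v) = 0 in Ω. Then for every nonnegative φ ∈ C_c^∞(Ω): ∫_Ω φ^p |∇_H v|^p dx ≤ p^p ∫_Ω v^p |∇_H φ|^p dx. -/

import Mathlib

open MeasureTheory
open scoped RealInnerProductSpace

/-- The horizontal gradient on the Heisenberg group `ℍⁿ = ℝ^{2n+1}` (coordinates
`ξ = (x, y, t)` with `x = (ξ 0, …, ξ (n-1))`, `y = (ξ n, …, ξ (2n-1))`, `t = ξ (2n)`),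
associated with the left-invariant vector fields `X_j = ∂/∂x_j + 2 y_j ∂/∂t` and
`Y_j = ∂/∂y_j − 2 x_j ∂/∂t`:  `∇_H u = (X_1 u, …, X_n u, Y_1 u, …, Y_n u) ∈ ℝ^{2n}`. -/
noncomputable def gradH (n : ℕ) (u : EuclideanSpace ℝ (Fin (2 * n + 1)) → ℝ)
    (ξ : EuclideanSpace ℝ (Fin (2 * n + 1))) : EuclideanSpace ℝ (Fin (2 * n)) :=
  (WithLp.equiv 2 (Fin (2 * n) → ℝ)).symm fun i =>
    if h : (i : ℕ) < n then
      -- `X_{i} u (ξ) = ∂u/∂x_i (ξ) + 2 y_i ∂u/∂t (ξ)`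
      fderiv ℝ u ξ (EuclideanSpace.single ⟨(i : ℕ), by omega⟩ 1)
        + 2 * ξ ⟨n + (i : ℕ), by omega⟩ *
            fderiv ℝ u ξ (EuclideanSpace.single ⟨2 * n, by omega⟩ 1)
    else
      -- `Y_{i−n} u (ξ) = ∂u/∂y_{i−n} (ξ) − 2 x_{i−n} ∂u/∂t (ξ)`
      fderiv ℝ u ξ (EuclideanSpace.single ⟨(i : ℕ), by omega⟩ 1)
        - 2 * ξ ⟨(i : ℕ) - n, by omega⟩ *
            fderiv ℝ u ξ (EuclideanSpace.single ⟨2 * n, by omega⟩ 1)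

/-- A weak sub-solution of `−∇_H·(|∇_H v|^{p−2} ∇_H v) = 0` in `Ω ⊆ ℍⁿ`. -/
def IsWeakSubSolutionHZero (n : ℕ) (p : ℝ) (Ω : Set (EuclideanSpace ℝ (Fin (2 * n + 1))))
    (v : EuclideanSpace ℝ (Fin (2 * n + 1)) → ℝ) : Prop :=
  ∀ φ : EuclideanSpace ℝ (Fin (2 * n + 1)) → ℝ, ContDiff ℝ 1 φ → HasCompactSupport φ →
    tsupport φ ⊆ Ω → (∀ x, 0 ≤ φ x) →
    ∫ x in Ω, ‖gradH n v x‖ ^ (p - 2) * ⟪gradH n v x, gradH n φ x⟫ ≤ 0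

/- ### Auxiliary lemmas -/

lemma gradH_apply (n : ℕ) (u : EuclideanSpace ℝ (Fin (2 * n + 1)) → ℝ)
    (ξ : EuclideanSpace ℝ (Fin (2 * n + 1))) (i : Fin (2 * n)) :
    gradH n u ξ i =
    (if h : (i : ℕ) < n then
      fderiv ℝ u ξ (EuclideanSpace.single ⟨(i : ℕ), by omega⟩ 1)
        + 2 * ξ ⟨n + (i : ℕ), by omega⟩ *
            fderiv ℝ u ξ (EuclideanSpace.single ⟨2 * n, by omega⟩ 1)
    else
      fderiv ℝ u ξ (EuclideanSpace.single ⟨(i : ℕ), by omega⟩ 1)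
        - 2 * ξ ⟨(i : ℕ) - n, by omega⟩ *
            fderiv ℝ u ξ (EuclideanSpace.single ⟨2 * n, by omega⟩ 1)) := rfl

lemma gradH_comb (n : ℕ) (u w z : EuclideanSpace ℝ (Fin (2 * n + 1)) → ℝ) (a b : ℝ)
    (ξ : EuclideanSpace ℝ (Fin (2 * n + 1)))
    (h : fderiv ℝ u ξ = a • fderiv ℝ w ξ + b • fderiv ℝ z ξ) :
    gradH n u ξ = a • gradH n w ξ + b • gradH n z ξ := by
  ext i
  simp only [PiLp.add_apply, PiLp.smul_apply, smul_eq_mul, gradH_apply, h,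
    ContinuousLinearMap.add_apply, ContinuousLinearMap.coe_smul', Pi.smul_apply, smul_eq_mul]
  split_ifs <;> ring

lemma gradH_eq_zero (n : ℕ) (u : EuclideanSpace ℝ (Fin (2 * n + 1)) → ℝ)
    (ξ : EuclideanSpace ℝ (Fin (2 * n + 1))) (h : fderiv ℝ u ξ = 0) :
    gradH n u ξ = 0 := by
  ext i
  simp only [gradH_apply, h, ContinuousLinearMap.zero_apply, PiLp.zero_apply]
  split_ifs <;> ring

lemma continuousOn_gradH (n : ℕ) (u : EuclideanSpace ℝ (Fin (2 * n + 1)) → ℝ)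
    (Ω : Set (EuclideanSpace ℝ (Fin (2 * n + 1))))
    (hu : ContinuousOn (fderiv ℝ u) Ω) :
    ContinuousOn (gradH n u) Ω := by
  have hcoord : ∀ j : Fin (2 * n + 1), Continuous
      (fun ξ : EuclideanSpace ℝ (Fin (2 * n + 1)) => ξ j) :=
    fun j => (EuclideanSpace.proj j).continuous
  have hcomp : ∀ (e : EuclideanSpace ℝ (Fin (2 * n + 1))), ContinuousOn
      (fun ξ => fderiv ℝ u ξ e) Ω := fun e => hu.clm_apply continuousOn_const
  apply (PiLp.continuous_toLp 2 (fun _ : Fin (2 * n) => ℝ)).comp_continuousOn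
  apply continuousOn_pi.2
  intro i
  by_cases h : (i : ℕ) < n
  · simp only [h, dif_pos]
    exact (hcomp _).add (((continuous_const.mul (hcoord _)).continuousOn).mul (hcomp _))
  · simp only [h, dif_neg, not_false_iff]
    exact (hcomp _).sub (((continuous_const.mul (hcoord _)).continuousOn).mul (hcomp _))

section RpowComp
variable {E : Type*} [NormedAddCommGroup E] [NormedSpace ℝ E]

lemma hasFDerivAt_rpow_comp {φ : E → ℝ} (hφ : ContDiff ℝ 1 φ) {p : ℝ} (hp : 1 < p) (x : E) :
    HasFDerivAt (fun x => φ x ^ p) ((p * φ x ^ (p - 1)) • fderiv ℝ φ x) x :=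
  (Real.hasDerivAt_rpow_const (Or.inr hp.le)).comp_hasFDerivAt x
    (hφ.differentiable one_ne_zero x).hasFDerivAt

lemma contDiff_rpow_comp {φ : E → ℝ} (hφ : ContDiff ℝ 1 φ) {p : ℝ} (hp : 1 < p) :
    ContDiff ℝ 1 (fun x => φ x ^ p) := by
  rw [contDiff_one_iff_fderiv]
  refine ⟨fun x => (hasFDerivAt_rpow_comp hφ hp x).differentiableAt, ?_⟩
  have : (fderiv ℝ fun x => φ x ^ p) = fun x => (p * φ x ^ (p - 1)) • fderiv ℝ φ x := by
    funext x; exact (hasFDerivAt_rpow_comp hφ hp x).fderiv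
  rw [this]
  exact (continuous_const.mul ((Real.continuous_rpow_const (by linarith)).comp
    hφ.continuous)).smul (hφ.continuous_fderiv one_ne_zero)

end RpowComp

lemma young_aux {p : ℝ} (hp : 1 < p) {a b : ℝ} (ha : 0 ≤ a) (hb : 0 ≤ b) :
    p * (a ^ (p - 1) * b) ≤ (p - 1) / p * a ^ p + p ^ (p - 1) * b ^ p := by
  have hp0 : (0:ℝ) < p := by linarith
  have hp1 : (0:ℝ) < p - 1 := by linarith
  set q : ℝ := p / (p - 1) with hq
  have hpq : q.HolderConjugate p :=
    ((Real.holderConjugate_iff_eq_conjExponent hp).2 rfl).symm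
  set s : ℝ := p ^ (-((p - 1) / p)) with hs
  have hs0 : 0 < s := Real.rpow_pos_of_pos hp0 _
  have key := Real.young_inequality_of_nonneg (a := a ^ (p - 1) * s) (b := b / s)
    (mul_nonneg (Real.rpow_nonneg ha _) hs0.le) (div_nonneg hb hs0.le) hpq
  have e0 : (a ^ (p - 1) * s) * (b / s) = a ^ (p - 1) * b := by field_simp
  have e1 : (a ^ (p - 1) * s) ^ q = a ^ p * p⁻¹ := by
    rw [Real.mul_rpow (Real.rpow_nonneg ha _) hs0.le, ← Real.rpow_mul ha, hs,
      ← Real.rpow_mul hp0.le]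
    have h1 : (p - 1) * q = p := by rw [hq]; field_simp
    have h2 : (-((p - 1) / p)) * q = -1 := by rw [hq]; field_simp
    rw [h1, h2, Real.rpow_neg_one]
  have e2 : (b / s) ^ p = b ^ p * p ^ (p - 1) := by
    rw [Real.div_rpow hb hs0.le, hs, ← Real.rpow_mul hp0.le]
    have h3 : (-((p - 1) / p)) * p = -(p - 1) := by field_simp
    rw [h3, Real.rpow_neg hp0.le]
    field_simp
  rw [e0, e1, e2] at key
  have hkey2 := mul_le_mul_of_nonneg_left key hp0.le
  calc p * (a ^ (p - 1) * b) ≤ p * (a ^ p * p⁻¹ / q + b ^ p * p ^ (p - 1) / p) := hkey2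
    _ = (p - 1) / p * a ^ p + p ^ (p - 1) * b ^ p := by rw [hq]; field_simp

lemma integrableOn_vanish {EE : Type*} [MeasureSpace EE] [TopologicalSpace EE]
    [OpensMeasurableSpace EE] [T2Space EE] [IsFiniteMeasureOnCompacts (volume : Measure EE)]
    {f : EE → ℝ} {Ω K : Set EE} (hΩm : MeasurableSet Ω)
    (hK : IsCompact K) (hKΩ : K ⊆ Ω) (hf : ContinuousOn f Ω)
    (h0 : ∀ x ∈ Ω, x ∉ K → f x = 0) : IntegrableOn f Ω := by
  obtain ⟨M, hM⟩ := hK.exists_bound_of_continuousOn (hf.mono hKΩ)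
  refine Integrable.mono' (g := K.indicator fun _ => max M 0)
    ?_ (hf.aestronglyMeasurable hΩm) ?_
  · rw [integrable_indicator_iff hK.measurableSet]
    exact integrableOn_const (lt_of_le_of_lt
      (Measure.restrict_apply_le _ _) hK.measure_lt_top).ne
  · refine (ae_restrict_iff' hΩm).2 (ae_of_all _ fun x hx => ?_)
    by_cases hxK : x ∈ K
    · rw [Set.indicator_of_mem hxK]
      exact (hM x hxK).trans (le_max_left _ _)
    · simp [Set.indicator_of_notMem hxK, h0 x hx hxK]

/-- **Caccioppoli inequality on the Heisenberg group, case `q = p`, `λ = 0`:**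
if `v > 0` is a weak sub-solution of `−∇_H·(|∇_H v|^{p−2} ∇_H v) = 0` in `Ω ⊆ ℍⁿ`,
then for every nonnegative `φ ∈ C_c^∞(Ω)`,
`∫_Ω φ^p ‖∇_H v‖^p ≤ p^p ∫_Ω v^p ‖∇_H φ‖^p`. -/
theorem caccioppoli_heisenberg_zero (n : ℕ) (p : ℝ) (hp : 1 < p)
    (Ω : Set (EuclideanSpace ℝ (Fin (2 * n + 1)))) (hΩ : IsOpen Ω)
    (v : EuclideanSpace ℝ (Fin (2 * n + 1)) → ℝ)
    (hv : ContDiffOn ℝ 1 v Ω) (hvpos : ∀ x ∈ Ω, 0 < v x)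
    (hsub : IsWeakSubSolutionHZero n p Ω v) :
    ∀ φ : EuclideanSpace ℝ (Fin (2 * n + 1)) → ℝ, ContDiff ℝ (⊤ : ℕ∞) φ →
      HasCompactSupport φ → tsupport φ ⊆ Ω → (∀ x, 0 ≤ φ x) →
      ∫ x in Ω, φ x ^ p * ‖gradH n v x‖ ^ p ≤
        p ^ p * ∫ x in Ω, v x ^ p * ‖gradH n φ x‖ ^ p := by
  intro φ hφ hφc hφΩ hφ0
  classical
  have hp0 : (0:ℝ) < p := by linarith
  have hp1 : (0:ℝ) < p - 1 := by linarith
  have hφ1 : ContDiff ℝ 1 φ := hφ.of_le (by simp)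
  set K : Set (EuclideanSpace ℝ (Fin (2 * n + 1))) := tsupport φ with hKdef
  have hK : IsCompact K := hφc
  have hKΩ : K ⊆ Ω := hφΩ
  -- the test function ψ = φ^p v (extended by 0 outside Ω)
  set ψ : EuclideanSpace ℝ (Fin (2 * n + 1)) → ℝ :=
    fun x => if x ∈ Ω then φ x ^ p * v x else 0 with hψdef
  have hψ_zero : ∀ x, φ x = 0 → ψ x = 0 := by
    intro x hx
    simp only [hψdef, hx, Real.zero_rpow hp0.ne', zero_mul, ite_self]
  have hψ_supp : Function.support ψ ⊆ K := by
    intro x hx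
    by_contra hxK
    exact hx (hψ_zero x (image_eq_zero_of_notMem_tsupport hxK))
  have hψc : HasCompactSupport ψ :=
    HasCompactSupport.intro hK fun x hx => by
      by_contra h
      exact hx (hψ_supp h)
  have hψΩ : tsupport ψ ⊆ Ω :=
    (closure_minimal hψ_supp (isClosed_tsupport φ)).trans hKΩ
  have hψ0 : ∀ x, 0 ≤ ψ x := by
    intro x
    simp only [hψdef]
    split_ifs with hx
    · exact mul_nonneg (Real.rpow_nonneg (hφ0 x) p) (hvpos x hx).le
    · exact le_rfl
  have hψ_event : ∀ x ∈ Ω, ψ =ᶠ[nhds x] fun y => φ y ^ p * v y :=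
    fun x hx => Filter.eventuallyEq_of_mem (hΩ.mem_nhds hx) fun y hy => if_pos hy
  have hvd : ∀ x ∈ Ω, DifferentiableAt ℝ v x :=
    fun x hx => (hv.contDiffAt (hΩ.mem_nhds hx)).differentiableAt one_ne_zero
  -- ψ is C¹
  have hψ1 : ContDiff ℝ 1 ψ := by
    rw [contDiff_iff_contDiffAt]
    intro x
    by_cases hx : x ∈ Ω
    · exact (((contDiff_rpow_comp hφ1 hp).contDiffAt).mul
        (hv.contDiffAt (hΩ.mem_nhds hx))).congr_of_eventuallyEq (hψ_event x hx)
    · have hxK : x ∉ K := fun h => hx (hKΩ h)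
      have : ψ =ᶠ[nhds x] fun _ => (0:ℝ) :=
        Filter.eventuallyEq_of_mem ((isClosed_tsupport φ).isOpen_compl.mem_nhds hxK)
          fun y hy => hψ_zero y (image_eq_zero_of_notMem_tsupport hy)
      exact contDiffAt_const.congr_of_eventuallyEq this
  -- derivative and horizontal gradient of ψ on Ω
  have hfd : ∀ x ∈ Ω, fderiv ℝ ψ x =
      (φ x ^ p) • fderiv ℝ v x + (v x * (p * φ x ^ (p - 1))) • fderiv ℝ φ x := by
    intro x hx
    rw [(hψ_event x hx).fderiv_eq,
      fderiv_fun_mul (hasFDerivAt_rpow_comp hφ1 hp x).differentiableAt (hvd x hx),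
      (hasFDerivAt_rpow_comp hφ1 hp x).fderiv, smul_smul]
  have hgrad : ∀ x ∈ Ω, gradH n ψ x =
      (φ x ^ p) • gradH n v x + (v x * (p * φ x ^ (p - 1))) • gradH n φ x :=
    fun x hx => gradH_comb n ψ v φ _ _ x (hfd x hx)
  -- key pointwise identity on Ω
  have hkey : ∀ x ∈ Ω,
      ‖gradH n v x‖ ^ (p - 2) * ⟪gradH n v x, gradH n ψ x⟫ =
      φ x ^ p * ‖gradH n v x‖ ^ p +
        p * (φ x ^ (p - 1) * v x *
          (‖gradH n v x‖ ^ (p - 2) * ⟪gradH n v x, gradH n φ x⟫)) := by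
    intro x hx
    rw [hgrad x hx, inner_add_right, real_inner_smul_right, real_inner_smul_right,
      real_inner_self_eq_norm_sq]
    by_cases hz : gradH n v x = 0
    · simp [hz, Real.zero_rpow hp0.ne']
    · have hz' : 0 < ‖gradH n v x‖ := norm_pos_iff.2 hz
      have h2 : ‖gradH n v x‖ ^ (p - 2) * ‖gradH n v x‖ ^ (2:ℕ) = ‖gradH n v x‖ ^ p := by
        rw [← Real.rpow_natCast ‖gradH n v x‖ 2, ← Real.rpow_add hz']
        norm_num
      linear_combination (φ x ^ p) * h2
  -- continuity of the horizontal gradients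
  have hGv : ContinuousOn (gradH n v) Ω :=
    continuousOn_gradH n v Ω (hv.continuousOn_fderiv_of_isOpen hΩ le_rfl)
  have hGφ : ContinuousOn (gradH n φ) Ω :=
    continuousOn_gradH n φ Ω ((hφ1.continuous_fderiv one_ne_zero).continuousOn)
  -- the four integrands
  set A : EuclideanSpace ℝ (Fin (2 * n + 1)) → ℝ :=
    fun x => φ x ^ p * ‖gradH n v x‖ ^ p with hAdef
  set B : EuclideanSpace ℝ (Fin (2 * n + 1)) → ℝ :=
    fun x => φ x ^ (p - 1) * v x *
      (‖gradH n v x‖ ^ (p - 2) * ⟪gradH n v x, gradH n φ x⟫) with hBdef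
  set C : EuclideanSpace ℝ (Fin (2 * n + 1)) → ℝ :=
    fun x => φ x ^ (p - 1) * v x *
      (‖gradH n v x‖ ^ (p - 1) * ‖gradH n φ x‖) with hCdef
  set D : EuclideanSpace ℝ (Fin (2 * n + 1)) → ℝ :=
    fun x => v x ^ p * ‖gradH n φ x‖ ^ p with hDdef
  -- gradH φ vanishes off K
  have hGφ0 : ∀ x, x ∉ K → gradH n φ x = 0 := by
    intro x hxK
    apply gradH_eq_zero
    have : φ =ᶠ[nhds x] fun _ => (0:ℝ) :=
      Filter.eventuallyEq_of_mem ((isClosed_tsupport φ).isOpen_compl.mem_nhds hxK)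
        fun y hy => image_eq_zero_of_notMem_tsupport hy
    rw [this.fderiv_eq]
    exact fderiv_const_apply 0
  -- integrability of A, C, D
  have contA : ContinuousOn A Ω :=
    (((Real.continuous_rpow_const hp0.le).comp hφ.continuous).continuousOn).mul
      (hGv.norm.rpow_const fun x _ => Or.inr hp0.le)
  have contC : ContinuousOn C Ω :=
    ((((Real.continuous_rpow_const hp1.le).comp hφ.continuous).continuousOn).mul
      hv.continuousOn).mul
      ((hGv.norm.rpow_const fun x _ => Or.inr hp1.le).mul hGφ.norm)
  have contD : ContinuousOn D Ω :=
    (hv.continuousOn.rpow_const fun x _ => Or.inr hp0.le).mul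
      (hGφ.norm.rpow_const fun x _ => Or.inr hp0.le)
  have hφK : ∀ x, x ∉ K → φ x = 0 := fun x hx => image_eq_zero_of_notMem_tsupport hx
  have intA : IntegrableOn A Ω := by
    refine integrableOn_vanish hΩ.measurableSet hK hKΩ contA fun x _ hxK => ?_
    simp [hAdef, hφK x hxK, Real.zero_rpow hp0.ne']
  have intC : IntegrableOn C Ω := by
    refine integrableOn_vanish hΩ.measurableSet hK hKΩ contC fun x _ hxK => ?_
    simp [hCdef, hφK x hxK, Real.zero_rpow hp1.ne']
  have intD : IntegrableOn D Ω := by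
    refine integrableOn_vanish hΩ.measurableSet hK hKΩ contD fun x _ hxK => ?_
    simp [hDdef, hGφ0 x hxK, Real.zero_rpow hp0.ne']
  -- |B| ≤ C on Ω, and B is integrable
  have habsBC : ∀ x ∈ Ω, |B x| ≤ C x := by
    intro x hx
    by_cases hz : gradH n v x = 0
    · simp [hBdef, hCdef, hz, Real.zero_rpow hp1.ne']
    · have hz' : 0 < ‖gradH n v x‖ := norm_pos_iff.2 hz
      have hrw : ‖gradH n v x‖ ^ (p - 2) * ‖gradH n v x‖ = ‖gradH n v x‖ ^ (p - 1) := by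
        rw [← Real.rpow_add_one hz'.ne' (p - 2), show p - 2 + 1 = p - 1 by ring]
      have h1 : (0:ℝ) ≤ φ x ^ (p - 1) := Real.rpow_nonneg (hφ0 x) _
      have h2 : (0:ℝ) ≤ v x := (hvpos x hx).le
      have hip : |⟪gradH n v x, gradH n φ x⟫| ≤ ‖gradH n v x‖ * ‖gradH n φ x‖ :=
        abs_real_inner_le_norm _ _
      have hB : |B x| = φ x ^ (p - 1) * v x *
          (‖gradH n v x‖ ^ (p - 2) * |⟪gradH n v x, gradH n φ x⟫|) := by
        rw [hBdef]
        rw [abs_mul, abs_mul, abs_mul, abs_of_nonneg h1, abs_of_nonneg h2,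
          abs_of_nonneg (Real.rpow_nonneg (norm_nonneg _) _)]
      rw [hB, hCdef]
      have step : ‖gradH n v x‖ ^ (p - 2) * |⟪gradH n v x, gradH n φ x⟫| ≤
          ‖gradH n v x‖ ^ (p - 2) * (‖gradH n v x‖ * ‖gradH n φ x‖) :=
        mul_le_mul_of_nonneg_left hip (Real.rpow_nonneg (norm_nonneg _) _)
      calc φ x ^ (p - 1) * v x * (‖gradH n v x‖ ^ (p - 2) * |⟪gradH n v x, gradH n φ x⟫|)
          ≤ φ x ^ (p - 1) * v x * (‖gradH n v x‖ ^ (p - 2) *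
              (‖gradH n v x‖ * ‖gradH n φ x‖)) :=
            mul_le_mul_of_nonneg_left step (mul_nonneg h1 h2)
        _ = φ x ^ (p - 1) * v x * (‖gradH n v x‖ ^ (p - 1) * ‖gradH n φ x‖) := by
            rw [← hrw]; ring
  have intB : IntegrableOn B Ω := by
    have hBm : AEStronglyMeasurable B (volume.restrict Ω) := by
      have m1 : AEStronglyMeasurable (fun x => φ x ^ (p - 1) * v x) (volume.restrict Ω) :=
        ((((Real.continuous_rpow_const hp1.le).comp hφ.continuous).continuousOn).mul
          hv.continuousOn).aestronglyMeasurable hΩ.measurableSet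
      have m2 : AEMeasurable (fun x => ‖gradH n v x‖ ^ (p - 2)) (volume.restrict Ω) := by
        have : AEMeasurable (fun x => ‖gradH n v x‖) (volume.restrict Ω) :=
          (hGv.norm.aestronglyMeasurable hΩ.measurableSet).aemeasurable
        fun_prop
      have m3 : AEStronglyMeasurable (fun x => ⟪gradH n v x, gradH n φ x⟫)
          (volume.restrict Ω) :=
        (hGv.inner hGφ).aestronglyMeasurable hΩ.measurableSet
      exact m1.mul (m2.aestronglyMeasurable.mul m3)
    refine intC.mono' hBm ?_
    refine (ae_restrict_iff' hΩ.measurableSet).2 (ae_of_all _ fun x hx => ?_)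
    rw [Real.norm_eq_abs]
    exact habsBC x hx
  -- Step 1: apply the weak sub-solution property to ψ
  have step1 : ∫ x in Ω, (A x + p * B x) ≤ 0 := by
    have h := hsub ψ hψ1 hψc hψΩ hψ0
    calc ∫ x in Ω, (A x + p * B x)
        = ∫ x in Ω, ‖gradH n v x‖ ^ (p - 2) * ⟪gradH n v x, gradH n ψ x⟫ :=
          setIntegral_congr_fun hΩ.measurableSet fun x hx => (hkey x hx).symm
      _ ≤ 0 := h
  have step2 : (∫ x in Ω, A x) + p * ∫ x in Ω, B x ≤ 0 := by
    have := integral_add intA (intB.const_mul p)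
    rw [this, integral_const_mul] at step1
    exact step1
  -- Step 2: Cauchy–Schwarz
  have hBC : ∀ x ∈ Ω, -B x ≤ C x := fun x hx => (neg_le_abs (B x)).trans (habsBC x hx)
  have step3 : (∫ x in Ω, A x) ≤ p * ∫ x in Ω, C x := by
    have h1 : (∫ x in Ω, A x) ≤ p * ∫ x in Ω, (-B x) := by
      rw [integral_neg]
      linarith [step2]
    have h2 : (∫ x in Ω, (-B x)) ≤ ∫ x in Ω, C x :=
      setIntegral_mono_on intB.neg intC hΩ.measurableSet hBC
    calc (∫ x in Ω, A x) ≤ p * ∫ x in Ω, (-B x) := h1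
      _ ≤ p * ∫ x in Ω, C x := mul_le_mul_of_nonneg_left h2 hp0.le
  -- Step 3: Young's inequality, pointwise on Ω
  have hYoung : ∀ x ∈ Ω, p * C x ≤ (p - 1) / p * A x + p ^ (p - 1) * D x := by
    intro x hx
    have ha : (0:ℝ) ≤ φ x * ‖gradH n v x‖ := mul_nonneg (hφ0 x) (norm_nonneg _)
    have hb : (0:ℝ) ≤ v x * ‖gradH n φ x‖ := mul_nonneg (hvpos x hx).le (norm_nonneg _)
    have h := young_aux hp ha hb
    rw [Real.mul_rpow (hφ0 x) (norm_nonneg _), Real.mul_rpow (hφ0 x) (norm_nonneg _),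
      Real.mul_rpow (hvpos x hx).le (norm_nonneg _)] at h
    calc p * C x
        = p * (φ x ^ (p - 1) * ‖gradH n v x‖ ^ (p - 1) * (v x * ‖gradH n φ x‖)) := by
          rw [hCdef]; ring
      _ ≤ (p - 1) / p * (φ x ^ p * ‖gradH n v x‖ ^ p) +
            p ^ (p - 1) * (v x ^ p * ‖gradH n φ x‖ ^ p) := h
      _ = (p - 1) / p * A x + p ^ (p - 1) * D x := by rw [hAdef, hDdef]
  have step4 : p * (∫ x in Ω, C x) ≤
      (p - 1) / p * (∫ x in Ω, A x) + p ^ (p - 1) * ∫ x in Ω, D x := by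
    have h1 : (∫ x in Ω, p * C x) ≤
        ∫ x in Ω, ((p - 1) / p * A x + p ^ (p - 1) * D x) :=
      setIntegral_mono_on (intC.const_mul p)
        ((intA.const_mul _).add (intD.const_mul _)) hΩ.measurableSet hYoung
    rw [integral_const_mul] at h1
    rw [integral_add (intA.const_mul _) (intD.const_mul _), integral_const_mul,
      integral_const_mul] at h1
    exact h1
  -- conclusion
  have hfinal : (∫ x in Ω, A x) ≤ (p - 1) / p * (∫ x in Ω, A x) +
      p ^ (p - 1) * ∫ x in Ω, D x := le_trans step3 step4
  have hmul := mul_le_mul_of_nonneg_left hfinal hp0.le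
  have hrw : p * ((p - 1) / p * (∫ x in Ω, A x) + p ^ (p - 1) * ∫ x in Ω, D x)
      = (p - 1) * (∫ x in Ω, A x) + p * (p ^ (p - 1) * ∫ x in Ω, D x) := by
    field_simp
  rw [hrw] at hmul
  have hpp : p ^ p = p * p ^ (p - 1) := by
    have h := Real.rpow_add hp0 1 (p - 1)
    rw [Real.rpow_one, show (1:ℝ) + (p - 1) = p by ring] at h
    exact h
  have : (∫ x in Ω, A x) ≤ p ^ p * ∫ x in Ω, D x := by
    rw [hpp]
    nlinarith [hmul]
  exact this
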